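/- arXiv:2206.11515 — 4 statements merged into one kernel-verified Lean document; each statement's English description precedes it below -/
import Mathlib

section
/- Let At be a finite set of atoms, Γ a finite set of propositional formulas over At, and X an interpretation. Then X is a stable model of the set of choice formulas {F ∨ ¬F : F ∈ Γ} if and only if X is a stable model of {F ∈ Γ : X ⊨ F}. -/
open Filter

attribute [local instance] Classical.propDecidable

/-- Propositional formulas over atoms `At`, built from atoms and `⊥`
    using `∧`, `∨`, `→`. -/
inductive Formula (At : Type) where
  | bot  : Formula At
  | atom : At → Formula At
  | and  : Formula At → Formula At → Formula At
  | or   : Formula At → Formula At → Formula At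
  | imp  : Formula At → Formula At → Formula At

namespace Formula

variable {At : Type}

/-- `¬F` abbreviates `F → ⊥`. -/
def neg (F : Formula At) : Formula At := imp F bot

/-- Classical satisfaction of a formula by an interpretation `X ⊆ At`. -/
def sat (X : Finset At) : Formula At → Prop
  | bot => False
  | atom a => a ∈ X
  | and F G => sat X F ∧ sat X G
  | or F G => sat X F ∨ sat X G
  | imp F G => sat X F → sat X G

/-- The reduct `F^X`: every maximal subformula not satisfied by `X` is
    replaced by `⊥`. -/
noncomputable def reduct (X : Finset At) : Formula At → Formula At
  | bot => bot
  | atom a => if sat X (atom a) then atom a else bot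
  | and F G => if sat X (and F G) then and (reduct X F) (reduct X G) else bot
  | or F G => if sat X (or F G) then or (reduct X F) (reduct X G) else bot
  | imp F G => if sat X (imp F G) then imp (reduct X F) (reduct X G) else bot

end Formula

variable {At : Type}

/-- `X` satisfies every formula in `Γ`. -/
def SatAll (X : Finset At) (Γ : Set (Formula At)) : Prop := ∀ F ∈ Γ, F.sat X

/-- `X` is a stable model of `Γ` (Ferraris semantics): `X` satisfies `Γ` and no
    proper subset of `X` satisfies the reduct `Γ^X`. -/
def IsStable (X : Finset At) (Γ : Set (Formula At)) : Prop :=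
  SatAll X Γ ∧ ∀ Y : Finset At, Y ⊂ X → ¬ SatAll Y (Formula.reduct X '' Γ)

/-- Weak constraint `:~ F [w, l]`. -/
structure WeakConstraint (At : Type) where
  formula : Formula At
  weight : ℝ
  level : ℕ

/-- `Cost_Ω(X, l)`: sum of the weights `w` over all `:~ F [w, l]` in `Ω` at level `l`
    whose formula is satisfied by `X`. -/
noncomputable def Cost (Ω : Finset (WeakConstraint At)) (X : Finset At) (l : ℕ) : ℝ :=
  ∑ c ∈ Ω.filter (fun c => c.level = l ∧ c.formula.sat X), c.weight

/-- `X` is an optimal stable model of `Γ ∪ Ω`. -/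
def OptStable (Γ : Set (Formula At)) (Ω : Finset (WeakConstraint At)) (X : Finset At) : Prop :=
  IsStable X Γ ∧
    ¬ ∃ Y : Finset At, IsStable Y Γ ∧ ∃ l : ℕ,
        Cost Ω Y l < Cost Ω X l ∧ ∀ l' : ℕ, l < l' → Cost Ω Y l' = Cost Ω X l'

/-- A weight is either the symbolic infinite weight `α` or a real number. -/
inductive Weight where
  | alpha : Weight
  | soft : ℝ → Weight

/-- The real value of a weight when the real number `a` is substituted for `α`. -/
def Weight.val (a : ℝ) : Weight → ℝ
  | .alpha => a
  | .soft w => w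

/-- A weighted formula `w : F`. -/
structure WFormula (At : Type) where
  weight : Weight
  formula : Formula At

/-- A hard formula `α : F`. -/
def WFormula.isHard (p : WFormula At) : Prop := p.weight = Weight.alpha

/-- A soft formula `w : F` with `w` a real number. -/
def WFormula.isSoft (p : WFormula At) : Prop := ∃ w : ℝ, p.weight = Weight.soft w

/-- `hard(Π)`. -/
noncomputable def hardPart (P : Finset (WFormula At)) : Finset (WFormula At) :=
  P.filter (fun p => p.isHard)

/-- `soft(Π)`. -/
noncomputable def softPart (P : Finset (WFormula At)) : Finset (WFormula At) :=
  P.filter (fun p => p.isSoft)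

/-- `Π_X`: the weighted formulas of `Π` whose formula is satisfied by `X`. -/
noncomputable def satPart (P : Finset (WFormula At)) (X : Finset At) : Finset (WFormula At) :=
  P.filter (fun p => p.formula.sat X)

/-- `SSM(Π)`: the soft stable models of the LP^MLN program `Π`. -/
def SSM (P : Finset (WFormula At)) : Set (Finset At) :=
  { X | IsStable X (WFormula.formula '' (↑(satPart P X) : Set (WFormula At))) }

/-- `W_Π(X, a)`. -/
noncomputable def Wgt (P : Finset (WFormula At)) (X : Finset At) (a : ℝ) : ℝ :=
  if X ∈ SSM P then Real.exp (∑ p ∈ satPart P X, p.weight.val a) else 0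

/-- The quotient whose limit as `a → ∞` defines `P_Π(X)`. -/
noncomputable def ratio [Fintype At] (P : Finset (WFormula At)) (X : Finset At) (a : ℝ) : ℝ :=
  Wgt P X a / ∑ Y ∈ Finset.univ.filter (fun Y => Y ∈ SSM P), Wgt P Y a

/-- `SSM'(Π)`: soft stable models satisfying all hard formulas. -/
def SSM' (P : Finset (WFormula At)) : Set (Finset At) :=
  { X | X ∈ SSM P ∧ ∀ p ∈ P, p.isHard → p.formula.sat X }

/-- `W'_Π(X)` (alternative semantics). -/
noncomputable def Wgt' (P : Finset (WFormula At)) (X : Finset At) : ℝ :=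
  if X ∈ SSM' P then
    Real.exp (∑ p ∈ (softPart P).filter (fun p => p.formula.sat X), p.weight.val 0)
  else 0

/-- `P'_Π(X)` (alternative semantics). -/
noncomputable def Pr' [Fintype At] (P : Finset (WFormula At)) (X : Finset At) : ℝ :=
  Wgt' P X / ∑ Y : Finset At, Wgt' P Y

/-- A plingo program: hard formulas, soft integrity constraints (a real weight
    together with the constraint formula), and weak constraints. -/
structure PlingoProgram (At : Type) where
  hard : Finset (Formula At)
  soft : Finset (ℝ × Formula At)
  weak : Finset (WeakConstraint At)

/-- `OSM(Π)`: optimal stable models of `hard(Π) ∪ weak(Π)`. -/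
def OSM (P : PlingoProgram At) : Set (Finset At) :=
  { X | OptStable (↑P.hard) P.weak X }

/-- `W''_Π(X)`. -/
noncomputable def Wgt'' (P : PlingoProgram At) (X : Finset At) : ℝ :=
  if X ∈ OSM P then Real.exp (∑ p ∈ P.soft.filter (fun p => p.2.sat X), p.1) else 0

/-- `P''_Π(X)`. -/
noncomputable def Pr'' [Fintype At] (P : PlingoProgram At) (X : Finset At) : ℝ :=
  Wgt'' P X / ∑ Y ∈ Finset.univ.filter (fun Y => Y ∈ OSM P), Wgt'' P Y

namespace Formula

theorem reduct_of_not_sat {X : Finset At} {F : Formula At} (h : ¬ F.sat X) :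
    F.reduct X = bot := by
  cases F <;> simp only [reduct] <;> first | rfl | exact if_neg h

theorem sat_or_neg (X : Finset At) (F : Formula At) : (F.or F.neg).sat X :=
  em (F.sat X)

/-- The reduct of `F ∨ ¬F` is `F^X ∨ ⊥` when `X ⊨ F` and the tautology `⊥ ∨ (⊥ → ⊥)` otherwise. -/
theorem sat_reduct_or_neg_iff (X Y : Finset At) (F : Formula At) :
    ((F.or F.neg).reduct X).sat Y ↔ (F.sat X → (F.reduct X).sat Y) := by
  have hor : (F.or F.neg).reduct X = (F.reduct X).or (F.neg.reduct X) :=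
    if_pos (sat_or_neg X F)
  by_cases hF : F.sat X
  · have hneg : F.neg.reduct X = bot := reduct_of_not_sat (not_not_intro hF)
    simp only [hor, hneg, sat, or_false, hF, true_imp_iff]
  · have hneg : F.neg.reduct X = imp bot bot := by
      rw [neg, reduct, if_pos (show (F.imp bot).sat X from hF), reduct_of_not_sat hF, reduct]
    simp only [hor, hneg, sat, hF, false_imp_iff, imp_self, or_true]

end Formula

theorem isStable_congr_of_satAll_reduct_iff {X : Finset At} {Γ Δ : Set (Formula At)}
    (hΓ : SatAll X Γ) (hΔ : SatAll X Δ)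
    (h : ∀ Y, SatAll Y (Formula.reduct X '' Γ) ↔ SatAll Y (Formula.reduct X '' Δ)) :
    IsStable X Γ ↔ IsStable X Δ := by
  simp only [IsStable, hΓ, hΔ, h]

theorem satAll_reduct_choice_iff (X Y : Finset At) (Γ : Set (Formula At)) :
    SatAll Y (Formula.reduct X '' ((fun F : Formula At => F.or F.neg) '' Γ)) ↔
      SatAll Y (Formula.reduct X '' {F ∈ Γ | F.sat X}) := by
  simp only [SatAll, Set.forall_mem_image, Formula.sat_reduct_or_neg_iff, Set.mem_ofPred_eq,
    and_imp]

theorem isStable_choice_iff (X : Finset At) (Γ : Set (Formula At)) :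
    IsStable X ((fun F : Formula At => F.or F.neg) '' Γ) ↔ IsStable X {F ∈ Γ | F.sat X} :=
  isStable_congr_of_satAll_reduct_iff
    (Set.forall_mem_image.2 fun F _ => Formula.sat_or_neg X F)
    (fun _ hF => hF.2) (satAll_reduct_choice_iff X · Γ)

theorem stable_model_choice_formulas_general {At : Type}
    (Γ : Finset (Formula At)) (X : Finset At) :
    IsStable X ((fun F : Formula At => F.or F.neg) '' ↑Γ) ↔
      IsStable X ↑(Γ.filter (fun F => F.sat X)) := by
  rw [Finset.coe_filter]
  exact isStable_choice_iff X Γ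

/-- `X` is a stable model of the choice formulas `{F ∨ ¬F : F ∈ Γ}`
    iff `X` is a stable model of `{F ∈ Γ : X ⊨ F}`. -/
theorem stable_model_choice_formulas {At : Type} [Fintype At]
    (Γ : Finset (Formula At)) (X : Finset At) :
    IsStable X ((fun F : Formula At => F.or F.neg) '' ↑Γ) ↔
      IsStable X ↑(Γ.filter (fun F => F.sat X)) :=
  stable_model_choice_formulas_general Γ X
end

section
/- (Proposition 1) If Π is an LP^MLN program such that soft(Π) contains only soft integrity constraints (soft formulas of the form w : ¬F), then SSM'(Π) = SM(hard(Π) with weights dropped), i.e., the soft stable models of Π satisfying all hard formulas are exactly the stable models of the set of formulas of hard(Π) with weights dropped. -/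
/-!
Once `X` satisfies the hard formulas, `Π_X` consists of `hard(Π)` together with the soft
constraints `¬F` that `X` satisfies, i.e. those with `X ⊭ F`. The reduct of such a constraint is
`⊥ → ⊥`, true in every interpretation, so these constraints affect neither the satisfaction nor the
minimality condition in the definition of a stable model.
-/

open Filter

attribute [local instance] Classical.propDecidable

variable {At : Type}

namespace Formula

theorem reduct_eq_bot_of_not_sat {X : Finset At} {F : Formula At} (hF : ¬ F.sat X) :
    F.reduct X = bot := by
  cases F <;> simp [reduct, hF]

theorem sat_reduct_neg_of_not_sat {X Y : Finset At} {F : Formula At} (hF : ¬ F.sat X) :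
    (F.neg.reduct X).sat Y := by
  simp [neg, reduct, sat, hF, reduct_eq_bot_of_not_sat hF]

end Formula

theorem satAll_union {X : Finset At} {Γ Δ : Set (Formula At)} :
    SatAll X (Γ ∪ Δ) ↔ SatAll X Γ ∧ SatAll X Δ := by
  simp only [SatAll, Set.mem_union, or_imp, forall_and]

theorem isStable_union_iff {X : Finset At} {Γ Δ : Set (Formula At)} (hΔ : SatAll X Δ)
    (hΔX : ∀ Y ⊂ X, SatAll Y (Formula.reduct X '' Δ)) :
    IsStable X (Γ ∪ Δ) ↔ IsStable X Γ := by
  simp only [IsStable, Set.image_union, satAll_union]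
  constructor
  · rintro ⟨⟨hΓ, -⟩, hmin⟩
    exact ⟨hΓ, fun Y hY hYΓ => hmin Y hY ⟨hYΓ, hΔX Y hY⟩⟩
  · rintro ⟨hΓ, hmin⟩
    exact ⟨⟨hΓ, hΔ⟩, fun Y hY hYΓΔ => hmin Y hY hYΓΔ.1⟩

theorem WFormula.isHard_or_isSoft (p : WFormula At) : p.isHard ∨ p.isSoft := by
  rcases hw : p.weight with _ | w
  · exact Or.inl hw
  · exact Or.inr ⟨w, hw⟩

theorem satPart_eq_hardPart_union {P : Finset (WFormula At)} {X : Finset At}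
    (hX : ∀ p ∈ P, p.isHard → p.formula.sat X) :
    satPart P X = hardPart P ∪ (softPart P).filter (fun p => p.formula.sat X) := by
  ext p
  simp only [satPart, hardPart, softPart, Finset.mem_union, Finset.mem_filter]
  constructor
  · rintro ⟨hp, hsat⟩
    exact (p.isHard_or_isSoft).imp (fun h => ⟨hp, h⟩) (fun h => ⟨⟨hp, h⟩, hsat⟩)
  · rintro (⟨hp, hh⟩ | ⟨⟨hp, -⟩, hsat⟩)
    exacts [⟨hp, hX p hp hh⟩, ⟨hp, hsat⟩]

theorem mem_SSM_iff_isStable_hardPart {P : Finset (WFormula At)} {X : Finset At}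
    (hsoft : ∀ p ∈ P, p.isSoft → ∃ F : Formula At, p.formula = F.neg)
    (hX : ∀ p ∈ P, p.isHard → p.formula.sat X) :
    X ∈ SSM P ↔ IsStable X (WFormula.formula '' (↑(hardPart P) : Set (WFormula At))) := by
  rw [SSM, Set.mem_ofPred_eq, satPart_eq_hardPart_union hX, Finset.coe_union, Set.image_union]
  refine isStable_union_iff ?_ fun Y _ => ?_
  · rintro _ ⟨p, hp, rfl⟩
    exact (Finset.mem_filter.1 hp).2
  · rintro _ ⟨_, ⟨p, hp, rfl⟩, rfl⟩
    obtain ⟨⟨hpP, hp_soft⟩, hsat⟩ := by simpa [softPart] using hp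
    obtain ⟨F, hF⟩ := hsoft p hpP hp_soft
    rw [hF] at hsat ⊢
    exact Formula.sat_reduct_neg_of_not_sat hsat

theorem ssm'_eq_sm_hard_general {At : Type} (P : Finset (WFormula At))
    (h : ∀ p ∈ P, p.isSoft → ∃ F : Formula At, p.formula = F.neg) :
    SSM' P = { X | IsStable X (WFormula.formula '' (↑(hardPart P) : Set (WFormula At))) } := by
  ext X
  constructor
  · rintro ⟨hSSM, hX⟩
    exact (mem_SSM_iff_isStable_hardPart h hX).1 hSSM
  · intro hstable
    have hX : ∀ p ∈ P, p.isHard → p.formula.sat X := fun p hp hh =>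
      hstable.1 _ ⟨p, Finset.mem_filter.2 ⟨hp, hh⟩, rfl⟩
    exact ⟨(mem_SSM_iff_isStable_hardPart h hX).2 hstable, hX⟩

/-- Proposition 1: if `soft(Π)` contains only soft integrity
    constraints, then `SSM'(Π) = SM(hard(Π))` (weights dropped). -/
theorem ssm'_eq_sm_hard {At : Type} [Fintype At] (P : Finset (WFormula At))
    (h : ∀ p ∈ P, p.isSoft → ∃ F : Formula At, p.formula = F.neg) :
    SSM' P = { X | IsStable X (WFormula.formula '' (↑(hardPart P) : Set (WFormula At))) } :=
  ssm'_eq_sm_hard_general P h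
end

section
/- (Proposition 3) Let Π be a plingo program and let τ₄(Π) be the plingo program consisting of hard(Π), the soft integrity constraints {−w : ¬F : (w : F) ∈ soft(Π)}, and the weak constraints {:~ ¬F [−w, l] : (:~ F [w, l]) ∈ weak(Π)}. Then for every interpretation X, P''_Π(X) and P''_{τ₄(Π)}(X) coincide; in particular OSM(Π) is nonempty if and only if OSM(τ₄(Π)) is nonempty, and when both probability functions are defined they are equal on every interpretation. -/
open Filter

attribute [local instance] Classical.propDecidable

variable {At : Type}

/-- The negative translation `τ₄`: keep `hard(Π)`, replace every soft formula
    `w : F` by `−w : ¬F`, and every weak constraint `:~ F [w, l]` by `:~ ¬F [−w, l]`. -/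
noncomputable def tau4 {At : Type} (P : PlingoProgram At) : PlingoProgram At where
  hard := P.hard
  soft := P.soft.image (fun p => (-p.1, p.2.neg))
  weak := P.weak.image (fun c => ⟨c.formula.neg, -c.weight, c.level⟩)

/-
Replacing `w : F` by `-w : ¬F` trades the weight `w` collected when `F` holds for the weight `-w`
collected when `F` fails, so the total collected by any interpretation drops by the constant
`∑ w`. On weak constraints this shifts each level's cost by a constant independent of the
interpretation, which leaves the lexicographic optimality comparison and hence `OSM` unchanged;
on soft formulas it multiplies every `W''` by the common factor `exp (-∑ w)`, which cancels in
the normalisation.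
-/

namespace Formula

@[simp]
lemma sat_neg (X : Finset At) (F : Formula At) : F.neg.sat X ↔ ¬ F.sat X := Iff.rfl

lemma neg_injective : Function.Injective (neg : Formula At → Formula At) :=
  fun _ _ h => (imp.inj h).1

end Formula

lemma Finset.sum_filter_not_neg {α : Type*} (s : Finset α) (q : α → Prop) (w : α → ℝ) :
    ∑ x ∈ s.filter (fun x => ¬ q x), -w x = ∑ x ∈ s.filter q, w x - ∑ x ∈ s, w x := by
  rw [Finset.sum_neg_distrib, ← Finset.sum_filter_add_sum_filter_not s q w]
  ring

namespace WeakConstraint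

def negate (c : WeakConstraint At) : WeakConstraint At := ⟨c.formula.neg, -c.weight, c.level⟩

lemma negate_injective : Function.Injective (negate : WeakConstraint At → WeakConstraint At) := by
  rintro ⟨F, w, l⟩ ⟨G, v, m⟩ h
  simp only [negate, mk.injEq, neg_inj] at h
  obtain ⟨hFG, rfl, rfl⟩ := h
  rw [Formula.neg_injective hFG]

end WeakConstraint

lemma cost_image_negate (Ω : Finset (WeakConstraint At)) (X : Finset At) (l : ℕ) :
    Cost (Ω.image WeakConstraint.negate) X l =
      Cost Ω X l - ∑ c ∈ Ω.filter (fun c => c.level = l), c.weight := by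
  unfold Cost
  rw [Finset.filter_image, Finset.sum_image WeakConstraint.negate_injective.injOn]
  simp only [WeakConstraint.negate, Formula.sat_neg, ← Finset.filter_filter]
  exact Finset.sum_filter_not_neg _ _ _

lemma optStable_eq_of_cost_eq_sub {Γ : Set (Formula At)} {Ω Ω' : Finset (WeakConstraint At)}
    (k : ℕ → ℝ) (h : ∀ X l, Cost Ω' X l = Cost Ω X l - k l) :
    OptStable Γ Ω' = OptStable Γ Ω := by
  funext X
  simp only [OptStable, h, sub_lt_sub_iff_right, sub_left_inj]

lemma osm_tau4 (P : PlingoProgram At) : OSM (tau4 P) = OSM P :=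
  congrArg Set.ofPred (optStable_eq_of_cost_eq_sub _ (cost_image_negate P.weak))

lemma sum_soft_tau4 (P : PlingoProgram At) (X : Finset At) :
    ∑ p ∈ (tau4 P).soft.filter (fun p => p.2.sat X), p.1 =
      -∑ p ∈ P.soft, p.1 + ∑ p ∈ P.soft.filter (fun p => p.2.sat X), p.1 := by
  have hinj : Function.Injective (fun p : ℝ × Formula At => (-p.1, p.2.neg)) :=
    fun p q h => Prod.ext (neg_injective (congrArg Prod.fst h))
      (Formula.neg_injective (congrArg Prod.snd h))
  rw [tau4, Finset.filter_image, Finset.sum_image hinj.injOn]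
  simp only [Formula.sat_neg]
  rw [Finset.sum_filter_not_neg]
  ring

lemma wgt''_tau4 (P : PlingoProgram At) (X : Finset At) :
    Wgt'' (tau4 P) X = Real.exp (-∑ p ∈ P.soft, p.1) * Wgt'' P X := by
  unfold Wgt''
  rw [osm_tau4]
  split_ifs
  · rw [sum_soft_tau4, Real.exp_add]
  · rw [mul_zero]

/-- Proposition 3: `P''_Π` and `P''_{τ₄(Π)}` coincide; in particular
    `OSM(Π)` is nonempty iff `OSM(τ₄(Π))` is. -/
theorem plingo_tau4_probability {At : Type} [Fintype At] (P : PlingoProgram At) :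
    ((OSM P).Nonempty ↔ (OSM (tau4 P)).Nonempty) ∧
      ∀ X : Finset At, Pr'' P X = Pr'' (tau4 P) X := by
  refine ⟨by rw [osm_tau4], fun X => ?_⟩
  simp only [Pr'', wgt''_tau4, osm_tau4, ← Finset.mul_sum]
  rw [mul_div_mul_left _ _ (Real.exp_ne_zero _)]
end

section
/- Let Γ be a finite set of propositional formulas over a finite set of atoms, Ω a finite set of weak constraints, and Ω₀ ⊆ Ω its weak constraints at level 0. Let Π be the plingo program with hard formulas {α : F : F ∈ Γ}, soft integrity constraints {w : ¬¬F : (:~ F [w, 0]) ∈ Ω₀}, and weak constraints Ω \ Ω₀. Then OSM(Π) equals the set of optimal stable models of Γ ∪ (Ω \ Ω₀) (the level-0 constraints do not affect optimality), and for every X ∈ OSM(Π), P''_Π(X) = exp(Cost_Ω(X, 0)) / Σ_{Y ∈ OSM(Π)} exp(Cost_Ω(Y, 0)); i.e., reinterpreting the weak constraints at level 0 as soft integrity constraints makes the probability of an optimal stable model proportional to the exponential of its cost at level 0. -/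
open Filter

attribute [local instance] Classical.propDecidable

variable {At : Type}

/-! Since `¬¬F` is classically equivalent to `F`, a level-`l` weak constraint `:~ F [w, l]`
and the soft integrity constraint `w : ¬¬F` are satisfied by the same interpretations; and
`c ↦ (w, ¬¬F)` loses no information on constraints of a fixed level. Hence the soft weight of
an interpretation under the reinterpreted level-`0` constraints is exactly its level-`0` cost,
while optimality only sees the remaining weak constraints `Ω \ Ω₀`. -/

namespace Formula

variable {At : Type}

@[simp]
theorem sat_neg_neg (X : Finset At) (F : Formula At) : F.neg.neg.sat X ↔ F.sat X := by
  simp only [neg, sat, imp_false, not_not]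

theorem neg_neg_injective : Function.Injective (fun F : Formula At => F.neg.neg) := by
  intro F G h
  simpa [neg] using h

end Formula

variable {At : Type}

theorem sum_image_neg_neg_filter_sat_eq_cost (Ω : Finset (WeakConstraint At)) (l : ℕ) (X : Finset At) :
    ∑ p ∈ ((Ω.filter (fun c => c.level = l)).image
        (fun c => (c.weight, c.formula.neg.neg))).filter (fun p => p.2.sat X), p.1 =
      Cost Ω X l := by
  have hinj : Set.InjOn (fun c : WeakConstraint At => (c.weight, c.formula.neg.neg))
      ↑((Ω.filter (fun c => c.level = l)).filter (fun c => c.formula.neg.neg.sat X)) := by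
    rintro ⟨F, w, k⟩ hc ⟨F', w', k'⟩ hc' h
    simp only [Finset.coe_filter, Finset.mem_filter, Set.mem_ofPred_eq] at hc hc'
    obtain ⟨rfl, hF⟩ := Prod.mk.inj h
    obtain rfl := Formula.neg_neg_injective hF
    obtain rfl : k = k' := hc.1.2.trans hc'.1.2.symm
    rfl
  rw [Finset.filter_image, Finset.sum_image hinj, Finset.filter_filter, Cost]
  simp only [Formula.sat_neg_neg]

theorem Wgt''_of_mem_OSM {P : PlingoProgram At} {X : Finset At} (hX : X ∈ OSM P) :
    Wgt'' P X = Real.exp (∑ p ∈ P.soft.filter (fun p => p.2.sat X), p.1) :=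
  if_pos hX

theorem Pr''_eq_of_Wgt''_eq [Fintype At] {P : PlingoProgram At} (f : Finset At → ℝ)
    (hf : ∀ Y ∈ OSM P, Wgt'' P Y = f Y) {X : Finset At} (hX : X ∈ OSM P) :
    Pr'' P X = f X / ∑ Y ∈ Finset.univ.filter (fun Y => Y ∈ OSM P), f Y := by
  rw [Pr'', hf X hX]
  congr 1
  exact Finset.sum_congr rfl fun Y hY => hf Y (Finset.mem_filter.mp hY).2

/-- reinterpreting the weak constraints at level `0` as soft integrity
    constraints. `OSM(Π)` equals the optimal stable models of `Γ ∪ (Ω \ Ω₀)`, and the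
    probability of each optimal stable model is proportional to the exponential of its
    cost at level `0`. -/
theorem plingo_level0_reinterpretation {At : Type} [Fintype At]
    (Γ : Finset (Formula At)) (Ω Ω0 : Finset (WeakConstraint At))
    (hΩ0 : Ω0 = Ω.filter (fun c => c.level = 0))
    (P : PlingoProgram At)
    (hP : P = ⟨Γ, Ω0.image (fun c => (c.weight, c.formula.neg.neg)), Ω \ Ω0⟩) :
    OSM P = { X | OptStable ↑Γ (Ω \ Ω0) X } ∧
      ∀ X ∈ OSM P, Pr'' P X =
        Real.exp (Cost Ω X 0) /
          ∑ Y ∈ Finset.univ.filter (fun Y => Y ∈ OSM P), Real.exp (Cost Ω Y 0) := by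
  subst hP hΩ0
  refine ⟨rfl, fun X hX => Pr''_eq_of_Wgt''_eq (fun Y => Real.exp (Cost Ω Y 0)) ?_ hX⟩
  intro Y hY
  rw [Wgt''_of_mem_OSM hY, sum_image_neg_neg_filter_sat_eq_cost]
end
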